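/- arXiv:2001.02797 — 2 statements merged into one kernel-verified Lean document; each statement's English description precedes it below -/
import Mathlib

section
/- Let S = X₁ + ⋯ + Xₙ be a sum of independent Bernoulli random variables with parameters p₁,…,pₙ ∈ (0,1), let x = p₁ + ⋯ + pₙ, and let X ~ Poisson(x). Then ρ_TV(L(S), L(X)) ≤ (1 - e^{-x}) x^{-1} ∑_{i=1}^n p_i² ≤ max_i p_i. -/
/-!
Stein–Chen method. Write `π` for the Poisson(`x`) law and, for `A ⊆ ℕ`, let `f_A` solve
`x f(k+1) - k f(k) = 1_A(k) - π(A)` with `f(0) = 0`. Then `P(S ∈ A) - π(A) = E[x f_A(S+1) - S f_A(S)]`,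
and conditioning on the `i`-th coordinate gives `E[p_i f(S+1) - X_i f(S)] = p_i² E[Δf(S - X_i + 1)]`.
From the explicit solution for `A = {j}`, whose increments are nonpositive except at `k = j`, one gets
`Δf_A ≤ (1 - e^{-x}) / x` (Barbour–Hall). Taking `A = {k : π(k) < P(S = k)}` turns this into the
bound on `ρ_TV`; the second inequality is `∑ p_i² ≤ (max p_i) x` together with `1 - e^{-x} ≤ 1`.
-/

open scoped BigOperators

/-- Probability mass function of the Poisson distribution with parameter `x`. -/
noncomputable def poiPMF (x : ℝ) (k : ℕ) : ℝ := Real.exp (-x) * x ^ k / (Nat.factorial k)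

/-- Probability of an outcome `u` for `n` independent Bernoulli(`p i`) random variables. -/
noncomputable def bernProb {n : ℕ} (p : Fin n → ℝ) (u : Fin n → Bool) : ℝ :=
  ∏ i, if u i then p i else 1 - p i

/-- The value of the sum `S = X₁ + ⋯ + Xₙ` on the outcome `u`. -/
def countOnes {n : ℕ} (u : Fin n → Bool) : ℕ := ∑ i, if u i then 1 else 0

/-- The law of `S = X₁ + ⋯ + Xₙ` (a pmf on ℕ). -/
noncomputable def lawS {n : ℕ} (p : Fin n → ℝ) (k : ℕ) : ℝ :=
  ∑ u : Fin n → Bool, if countOnes u = k then bernProb p u else 0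

/-- Total variation distance between two laws on ℕ given by their pmfs. -/
noncomputable def tvDist (p q : ℕ → ℝ) : ℝ := (1 / 2) * ∑' k : ℕ, |p k - q k|

open Finset Real Nat

noncomputable def expPartialSum (x : ℝ) (k : ℕ) : ℝ := ∑ l ∈ range k, x ^ l / l !

lemma pow_succ_div_factorial_succ_mul (x : ℝ) (l : ℕ) :
    (l + 1) * (x ^ (l + 1) / (l + 1)!) = x * (x ^ l / l !) := by
  push_cast [factorial_succ]
  field_simp
  ring

lemma hasSum_exp_sub_expPartialSum (x : ℝ) (k : ℕ) :
    HasSum (fun l ↦ x ^ (l + k) / (l + k)!) (exp x - expPartialSum x k) := by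
  rw [expPartialSum, hasSum_nat_add_iff' k (f := fun l ↦ x ^ l / l !), exp_eq_exp_ℝ]
  exact NormedSpace.expSeries_div_hasSum_exp x

lemma mul_expPartialSum_le {x : ℝ} (hx : 0 ≤ x) (k : ℕ) :
    x * expPartialSum x k ≤ k * (expPartialSum x (k + 1) - 1) := by
  rw [expPartialSum, expPartialSum, sum_range_succ', pow_zero, factorial_zero, cast_one,
    div_one, add_sub_cancel_right, mul_sum, mul_sum]
  refine sum_le_sum fun l hl ↦ ?_
  have hlk : (l + 1 : ℝ) ≤ k := by exact_mod_cast mem_range.1 hl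
  rw [← pow_succ_div_factorial_succ_mul]
  gcongr

lemma mul_exp_sub_expPartialSum_le {x : ℝ} (hx : 0 ≤ x) (k : ℕ) :
    k * (exp x - expPartialSum x (k + 1)) ≤ x * (exp x - expPartialSum x k) := by
  refine hasSum_le (fun l ↦ ?_) ((hasSum_exp_sub_expPartialSum x (k + 1)).mul_left _)
    ((hasSum_exp_sub_expPartialSum x k).mul_left _)
  rw [← add_assoc, ← pow_succ_div_factorial_succ_mul]
  gcongr
  push_cast
  linarith

lemma hasSum_poiPMF (x : ℝ) : HasSum (poiPMF x) 1 := by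
  have h := (NormedSpace.expSeries_div_hasSum_exp x).mul_left (exp (-x))
  rw [← exp_eq_exp_ℝ, ← exp_add, neg_add_cancel, exp_zero] at h
  exact h.congr_fun fun k ↦ mul_div_assoc _ _ _

lemma poiPMF_nonneg {x : ℝ} (hx : 0 ≤ x) (k : ℕ) : 0 ≤ poiPMF x k := by
  rw [poiPMF]; positivity

lemma pow_div_factorial_eq_poiPMF_mul_exp (x : ℝ) (k : ℕ) : x ^ k / k ! = poiPMF x k * exp x := by
  rw [poiPMF, div_mul_eq_mul_div, mul_right_comm, ← exp_add, neg_add_cancel, exp_zero, one_mul]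

def steinChenOp (x : ℝ) (f : ℕ → ℝ) (k : ℕ) : ℝ := x * f (k + 1) - k * f k

noncomputable def steinSol (x : ℝ) (j : ℕ) : ℕ → ℝ
  | 0 => 0
  | k + 1 => k ! / x ^ (k + 1) *
      ∑ l ∈ range (k + 1), ((if l = j then 1 else 0) - poiPMF x j) * (x ^ l / l !)

lemma steinChenOp_steinSol {x : ℝ} (hx : x ≠ 0) (j k : ℕ) :
    steinChenOp x (steinSol x j) k = (if k = j then 1 else 0) - poiPMF x j := by
  cases k with
  | zero => simp [steinChenOp, steinSol, hx]
  | succ m =>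
    simp only [steinChenOp, steinSol, sum_range_succ _ (m + 1)]
    push_cast [factorial_succ]
    field_simp
    ring

lemma steinSol_succ (x : ℝ) (j k : ℕ) :
    steinSol x j (k + 1) = k ! / x ^ (k + 1) *
      ((if j ≤ k then poiPMF x j * exp x else 0) - poiPMF x j * expPartialSum x (k + 1)) := by
  simp only [steinSol, sub_mul, sum_sub_distrib, ite_mul, one_mul, zero_mul, sum_ite_eq',
    mem_range, Nat.lt_succ_iff, ← mul_sum, expPartialSum, pow_div_factorial_eq_poiPMF_mul_exp]

lemma steinSol_sub_nonpos_of_le {x : ℝ} (hx : 0 < x) {j k : ℕ} (hjk : j ≤ k) :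
    steinSol x j (k + 2) - steinSol x j (k + 1) ≤ 0 := by
  have key := mul_exp_sub_expPartialSum_le hx.le (k + 1)
  have h : steinSol x j (k + 2) - steinSol x j (k + 1) = k ! / x ^ (k + 2) * poiPMF x j *
      ((k + 1 : ℕ) * (exp x - expPartialSum x (k + 2)) - x * (exp x - expPartialSum x (k + 1))) := by
    rw [steinSol_succ, steinSol_succ, if_pos (by omega), if_pos hjk]
    push_cast [factorial_succ]
    field_simp
    ring
  rw [h]
  exact mul_nonpos_of_nonneg_of_nonpos (by positivity [poiPMF_nonneg hx.le j]) (by linarith)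

lemma steinSol_sub_nonpos_of_lt {x : ℝ} (hx : 0 < x) {j k : ℕ} (hkj : k + 1 < j) :
    steinSol x j (k + 2) - steinSol x j (k + 1) ≤ 0 := by
  have key := mul_expPartialSum_le hx.le (k + 1)
  have h : steinSol x j (k + 2) - steinSol x j (k + 1) = k ! / x ^ (k + 2) * poiPMF x j *
      (x * expPartialSum x (k + 1) - (k + 1 : ℕ) * expPartialSum x (k + 2)) := by
    rw [steinSol_succ, steinSol_succ, if_neg (by omega), if_neg (by omega)]
    push_cast [factorial_succ]
    field_simp
    ring
  rw [h]
  exact mul_nonpos_of_nonneg_of_nonpos (by positivity [poiPMF_nonneg hx.le j]) (by linarith)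

lemma steinSol_sub_le_of_eq {x : ℝ} (hx : 0 < x) (k : ℕ) :
    steinSol x (k + 1) (k + 2) - steinSol x (k + 1) (k + 1) ≤ (1 - exp (-x)) / x := by
  have key := mul_expPartialSum_le hx.le (k + 1)
  have h : steinSol x (k + 1) (k + 2) - steinSol x (k + 1) (k + 1) = exp (-x) / x *
      (exp x - expPartialSum x (k + 2) + x * expPartialSum x (k + 1) / (k + 1 : ℕ)) := by
    rw [steinSol_succ, steinSol_succ, if_pos le_rfl, if_neg (by omega), poiPMF]
    push_cast [factorial_succ]
    field_simp
    ring
  have hexp : exp (-x) * exp x = 1 := by rw [← exp_add, neg_add_cancel, exp_zero]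
  have key' : x * expPartialSum x (k + 1) / (k + 1 : ℕ) ≤ expPartialSum x (k + 2) - 1 := by
    rw [div_le_iff₀ (by positivity)]
    linarith
  rw [h, div_mul_eq_mul_div]
  gcongr
  calc exp (-x) * (exp x - expPartialSum x (k + 2) + x * expPartialSum x (k + 1) / (k + 1 : ℕ))
      ≤ exp (-x) * (exp x - 1) := by gcongr; linarith
    _ = 1 - exp (-x) := by rw [mul_sub, hexp, mul_one]

lemma steinSol_sub_le {x : ℝ} (hx : 0 < x) (j k : ℕ) :
    steinSol x j (k + 2) - steinSol x j (k + 1) ≤ if j = k + 1 then (1 - exp (-x)) / x else 0 := by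
  split_ifs with hj
  · subst hj
    exact steinSol_sub_le_of_eq hx k
  · rcases Nat.lt_or_gt_of_ne hj with h | h
    · exact steinSol_sub_nonpos_of_le hx (by omega)
    · exact steinSol_sub_nonpos_of_lt hx h

noncomputable def steinSolSet (x : ℝ) (A : Finset ℕ) (k : ℕ) : ℝ := ∑ j ∈ A, steinSol x j k

lemma steinChenOp_steinSolSet {x : ℝ} (hx : x ≠ 0) (A : Finset ℕ) (k : ℕ) :
    steinChenOp x (steinSolSet x A) k = (if k ∈ A then 1 else 0) - ∑ j ∈ A, poiPMF x j := by
  have h : steinChenOp x (steinSolSet x A) k = ∑ j ∈ A, steinChenOp x (steinSol x j) k := by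
    simp only [steinChenOp, steinSolSet, mul_sum, sum_sub_distrib]
  simp only [h, steinChenOp_steinSol hx, sum_sub_distrib, sum_ite_eq]

lemma steinSolSet_sub_le {x : ℝ} (hx : 0 < x) (A : Finset ℕ) (k : ℕ) :
    steinSolSet x A (k + 2) - steinSolSet x A (k + 1) ≤ (1 - exp (-x)) / x := by
  have hc : 0 ≤ (1 - exp (-x)) / x :=
    div_nonneg (sub_nonneg.2 (exp_le_one_iff.2 (by linarith))) hx.le
  calc steinSolSet x A (k + 2) - steinSolSet x A (k + 1)
      = ∑ j ∈ A, (steinSol x j (k + 2) - steinSol x j (k + 1)) := by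
        rw [steinSolSet, steinSolSet, sum_sub_distrib]
    _ ≤ ∑ j ∈ A, if j = k + 1 then (1 - exp (-x)) / x else 0 :=
        sum_le_sum fun j _ ↦ steinSol_sub_le hx j k
    _ ≤ (1 - exp (-x)) / x := by
        rw [sum_ite_eq']
        split_ifs
        exacts [le_rfl, hc]

lemma sum_sum_update {ι β M : Type*} [Fintype ι] [DecidableEq ι] [Fintype β] [AddCommMonoid M]
    (i : ι) (Φ : (ι → β) → M) :
    ∑ u, ∑ b, Φ (Function.update u i b) = Fintype.card β • ∑ u, Φ u := by
  let σ : Equiv.Perm ((ι → β) × β) := Function.Involutive.toPerm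
    (fun q ↦ (Function.update q.1 i q.2, q.1 i)) fun q ↦ by simp
  calc ∑ u, ∑ b, Φ (Function.update u i b) = ∑ q, Φ (σ q).1 := (Fintype.sum_prod_type' _).symm
    _ = ∑ q : (ι → β) × β, Φ q.1 := Equiv.sum_comp σ fun q ↦ Φ q.1
    _ = Fintype.card β • ∑ u, Φ u := by
      rw [Fintype.sum_prod_type, smul_sum]
      simp only [sum_const, Finset.card_univ]

section Bernoulli

variable {n : ℕ}

-- As a function on all of `Fin n → Bool` this ignores `u i`, so its total mass is `2`.
noncomputable def bernProbExcept (p : Fin n → ℝ) (i : Fin n) (u : Fin n → Bool) : ℝ :=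
  ∏ j ∈ univ \ {i}, if u j then p j else 1 - p j

def countOnesExcept (i : Fin n) (u : Fin n → Bool) : ℕ :=
  ∑ j ∈ univ \ {i}, if u j then 1 else 0

lemma bernProb_update (p : Fin n → ℝ) (i : Fin n) (u : Fin n → Bool) (b : Bool) :
    bernProb p (Function.update u i b) = (if b then p i else 1 - p i) * bernProbExcept p i u := by
  rw [bernProb, bernProbExcept, ← prod_update_of_mem (mem_univ i)]
  congr 1 with j
  by_cases hj : j = i <;> simp [hj]

lemma countOnes_update (i : Fin n) (u : Fin n → Bool) (b : Bool) :
    countOnes (Function.update u i b) = (if b then 1 else 0) + countOnesExcept i u := by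
  rw [countOnes, countOnesExcept, ← sum_update_of_mem (mem_univ i)]
  congr 1 with j
  by_cases hj : j = i <;> simp [hj]

lemma sum_bernProb (p : Fin n → ℝ) : ∑ u, bernProb p u = 1 := by
  simp_rw [bernProb, ← Fintype.prod_sum fun j (b : Bool) ↦ if b then p j else 1 - p j]
  simp

lemma sum_bernProbExcept (p : Fin n → ℝ) (i : Fin n) : ∑ u, bernProbExcept p i u = 2 := by
  have h := sum_sum_update i (bernProb p)
  simp only [Fintype.sum_bool, bernProb_update, sum_bernProb, if_true, Bool.false_eq_true,
    if_false, ← add_mul, add_sub_cancel, one_mul, Fintype.card_bool, nsmul_eq_mul] at h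
  rw [h]
  norm_num

lemma bernProbExcept_nonneg {p : Fin n → ℝ} (hp : ∀ i, 0 ≤ p i ∧ p i ≤ 1) (i : Fin n)
    (u : Fin n → Bool) : 0 ≤ bernProbExcept p i u :=
  prod_nonneg fun j _ ↦ by split_ifs <;> linarith [hp j]

end Bernoulli

section SteinBernoulli

variable {n : ℕ}

lemma steinChenOp_countOnes (p : Fin n → ℝ) (f : ℕ → ℝ) (u : Fin n → Bool) :
    steinChenOp (∑ i, p i) f (countOnes u) =
      ∑ i, (p i * f (countOnes u + 1) - (if u i then 1 else 0) * f (countOnes u)) := by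
  rw [steinChenOp, sum_sub_distrib, ← sum_mul, ← sum_mul, countOnes]
  push_cast
  rfl

lemma sum_bernProb_mul_coord (p : Fin n → ℝ) (f : ℕ → ℝ) (i : Fin n) :
    ∑ u, bernProb p u * (p i * f (countOnes u + 1) - (if u i then 1 else 0) * f (countOnes u)) =
      p i ^ 2 * (∑ u, bernProbExcept p i u *
        (f (countOnesExcept i u + 2) - f (countOnesExcept i u + 1))) / 2 := by
  have h := sum_sum_update i fun u ↦
    bernProb p u * (p i * f (countOnes u + 1) - (if u i then 1 else 0) * f (countOnes u))
  simp only [Fintype.sum_bool, bernProb_update, countOnes_update, Function.update_self,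
    Fintype.card_bool, nsmul_eq_mul] at h
  rw [eq_div_iff two_ne_zero, mul_comm, ← Nat.cast_two, ← h, mul_sum]
  refine sum_congr rfl fun u _ ↦ ?_
  simp only [if_true, Bool.false_eq_true, if_false, zero_add]
  rw [show 1 + countOnesExcept i u + 1 = countOnesExcept i u + 2 by omega, add_comm 1]
  ring

lemma sum_bernProb_mul_steinChenOp_le {p : Fin n → ℝ} (hp : ∀ i, 0 ≤ p i ∧ p i ≤ 1)
    {f : ℕ → ℝ} {M : ℝ} (hf : ∀ k, f (k + 2) - f (k + 1) ≤ M) :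
    ∑ u, bernProb p u * steinChenOp (∑ i, p i) f (countOnes u) ≤ M * ∑ i, p i ^ 2 := by
  simp only [steinChenOp_countOnes, mul_sum]
  rw [sum_comm]
  refine sum_le_sum fun i _ ↦ ?_
  rw [sum_bernProb_mul_coord]
  have h : ∑ u, bernProbExcept p i u * (f (countOnesExcept i u + 2) - f (countOnesExcept i u + 1))
      ≤ ∑ u, bernProbExcept p i u * M :=
    sum_le_sum fun u _ ↦ mul_le_mul_of_nonneg_left (hf _) (bernProbExcept_nonneg hp i u)
  rw [← sum_mul, sum_bernProbExcept] at h
  nlinarith [sq_nonneg (p i)]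

end SteinBernoulli

section Law

variable {n : ℕ}

lemma countOnes_le (u : Fin n → Bool) : countOnes u ≤ n :=
  calc countOnes u ≤ ∑ _i : Fin n, 1 := sum_le_sum fun i _ ↦ by split_ifs <;> omega
    _ = n := by simp

lemma sum_lawS (p : Fin n → ℝ) (A : Finset ℕ) :
    ∑ k ∈ A, lawS p k = ∑ u, if countOnes u ∈ A then bernProb p u else 0 := by
  unfold lawS
  rw [sum_comm]
  simp only [sum_ite_eq]

lemma lawS_eq_zero_of_lt (p : Fin n → ℝ) {k : ℕ} (hk : n < k) : lawS p k = 0 :=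
  sum_eq_zero fun u _ ↦ if_neg (by have := countOnes_le u; omega)

lemma sum_range_lawS (p : Fin n → ℝ) : ∑ k ∈ range (n + 1), lawS p k = 1 := by
  rw [sum_lawS, ← sum_bernProb p]
  exact sum_congr rfl fun u _ ↦ if_pos (mem_range.2 (Nat.lt_succ_of_le (countOnes_le u)))

lemma sum_lawS_sub_sum_poiPMF_le {p : Fin n → ℝ} (hp : ∀ i, 0 ≤ p i ∧ p i ≤ 1)
    (hx : 0 < ∑ i, p i) (A : Finset ℕ) :
    ∑ k ∈ A, lawS p k - ∑ k ∈ A, poiPMF (∑ i, p i) k ≤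
      (1 - exp (-∑ i, p i)) / (∑ i, p i) * ∑ i, p i ^ 2 :=
  calc ∑ k ∈ A, lawS p k - ∑ k ∈ A, poiPMF (∑ i, p i) k
      = ∑ u, bernProb p u * steinChenOp (∑ i, p i) (steinSolSet (∑ i, p i) A) (countOnes u) := by
        simp only [steinChenOp_steinSolSet hx.ne', mul_sub, sum_sub_distrib, ← sum_mul,
          sum_bernProb, one_mul, sum_lawS, mul_ite, mul_one, mul_zero]
    _ ≤ _ := sum_bernProb_mul_steinChenOp_le hp (steinSolSet_sub_le hx A)

end Law

lemma tvDist_eq_sum_filter_lt {a b : ℕ → ℝ} (s : Finset ℕ) (ha : ∀ k ∉ s, a k = 0)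
    (hb : ∀ k, 0 ≤ b k) (hab : HasSum b (∑ k ∈ s, a k)) :
    tvDist a b = ∑ k ∈ s with b k < a k, (a k - b k) := by
  have hpos : ∀ k ∉ s, max (a k - b k) 0 = 0 := fun k hk ↦ by
    rw [ha k hk]
    exact max_eq_right (by linarith [hb k])
  have habs : ∀ k, 2 * max (a k - b k) 0 - (a k - b k) = |a k - b k| := fun k ↦ by
    rcases le_total (a k - b k) 0 with h | h
    · rw [abs_of_nonpos h, max_eq_right h]; ring
    · rw [abs_of_nonneg h, max_eq_left h]; ring
  have hsum : HasSum (fun k ↦ |a k - b k|) (2 * ∑ k ∈ s, max (a k - b k) 0) := by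
    have := ((hasSum_sum_of_ne_finset_zero hpos).mul_left 2).sub
      ((hasSum_sum_of_ne_finset_zero ha).sub hab)
    simpa only [habs, sub_self, sub_zero] using this
  rw [tvDist, hsum.tsum_eq, sum_filter, ← mul_assoc, one_div, inv_mul_cancel₀ two_ne_zero,
    one_mul]
  refine sum_congr rfl fun k _ ↦ ?_
  split_ifs with h
  · exact max_eq_left (by linarith)
  · exact max_eq_right (by linarith)

lemma one_sub_exp_neg_mul_inv_mul_sum_sq_le_sup' {ι : Type*} (s : Finset ι) (hs : s.Nonempty)
    {p : ι → ℝ} (hp : ∀ i ∈ s, 0 ≤ p i) :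
    (1 - exp (-∑ i ∈ s, p i)) * (∑ i ∈ s, p i)⁻¹ * ∑ i ∈ s, p i ^ 2 ≤ s.sup' hs p := by
  set x := ∑ i ∈ s, p i
  set m := s.sup' hs p
  have hpm : ∀ i ∈ s, p i ≤ m := fun i hi ↦ le_sup' p hi
  have hm : 0 ≤ m := (hp _ hs.choose_spec).trans (hpm _ hs.choose_spec)
  have hx : 0 ≤ x := sum_nonneg hp
  have hsq : ∑ i ∈ s, p i ^ 2 ≤ m * x := by
    rw [mul_sum]
    exact sum_le_sum fun i hi ↦ by rw [sq]; exact mul_le_mul_of_nonneg_right (hpm i hi) (hp i hi)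
  have hmean : x⁻¹ * ∑ i ∈ s, p i ^ 2 ≤ m := by
    rcases hx.eq_or_lt with h | h
    · rw [← h, inv_zero, zero_mul]; exact hm
    · rw [inv_mul_le_iff₀ h]; linarith
  have he : 0 ≤ 1 - exp (-x) ∧ 1 - exp (-x) ≤ 1 :=
    ⟨sub_nonneg.2 (exp_le_one_iff.2 (by linarith)), by linarith [exp_pos (-x)]⟩
  calc (1 - exp (-x)) * x⁻¹ * ∑ i ∈ s, p i ^ 2 = (1 - exp (-x)) * (x⁻¹ * ∑ i ∈ s, p i ^ 2) := by
        ring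
    _ ≤ 1 * m := mul_le_mul he.2 hmean 
        (mul_nonneg (inv_nonneg.2 hx) (sum_nonneg fun i _ ↦ sq_nonneg (p i))) zero_le_one
    _ = m := one_mul m

/-- Le Cam / Barbour–Hall bound: if `S` is a sum of `n` independent Bernoulli(`p i`) variables,
`x = ∑ p i`, and `X ~ Poisson(x)`, then
`ρ_TV(L(S), L(X)) ≤ (1 - e^{-x}) x⁻¹ ∑ p i ² ≤ max_i p i`. -/
theorem stmt1 {n : ℕ} (hn : 0 < n) (p : Fin n → ℝ) (hp : ∀ i, 0 < p i ∧ p i < 1) :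
    tvDist (lawS p) (poiPMF (∑ i, p i)) ≤
      (1 - Real.exp (-(∑ i, p i))) * (∑ i, p i)⁻¹ * ∑ i, (p i) ^ 2 ∧
    (1 - Real.exp (-(∑ i, p i))) * (∑ i, p i)⁻¹ * ∑ i, (p i) ^ 2 ≤
      Finset.univ.sup' ⟨⟨0, hn⟩, Finset.mem_univ _⟩ p := by
  have hx : 0 < ∑ i, p i := sum_pos (fun i _ ↦ (hp i).1) ⟨⟨0, hn⟩, mem_univ _⟩
  refine ⟨?_, one_sub_exp_neg_mul_inv_mul_sum_sq_le_sup' _ _ fun i _ ↦ (hp i).1.le⟩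
  have hlaw : HasSum (poiPMF (∑ i, p i)) (∑ k ∈ range (n + 1), lawS p k) := by
    rw [sum_range_lawS]
    exact hasSum_poiPMF _
  rw [tvDist_eq_sum_filter_lt _ (fun k hk ↦ lawS_eq_zero_of_lt p (by simpa using hk))
    (poiPMF_nonneg hx.le) hlaw, sum_sub_distrib, ← div_eq_mul_inv]
  exact sum_lawS_sub_sum_poiPMF_le (fun i ↦ ⟨(hp i).1.le, (hp i).2.le⟩) hx _
end

section
/- Let Γⁿ be a sequence of weighted congestion games with wⁿ → 0 and dⁿ_t → d_t, and let σⁿ be an arbitrary sequence of mixed strategy profiles whose expected flow-load pairs (yⁿ, xⁿ) converge to (y, x). Then the expected social cost ESC(σⁿ) = E[∑_e Xⁿ_e c_e(Xⁿ_e)] converges to SC(y, x) = ∑_e x_e c_e(x_e). -/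
open scoped BigOperators Classical
open Filter Topology

section Defs

variable {E T N : Type*}

noncomputable def expVal [Fintype E] [Fintype N] (σ : N → Finset E → ℝ)
    (g : (N → Finset E) → ℝ) : ℝ :=
  ∑ a : N → Finset E, (∏ i, σ i (a i)) * g a

noncomputable def loadW [Fintype E] [Fintype N] (w : N → ℝ) (e : E)
    (a : N → Finset E) : ℝ :=
  ∑ i, if e ∈ a i then w i else 0

noncomputable def flowW [Fintype E] [Fintype N] (w : N → ℝ) (tm : N → T) (t : T)
    (s : Finset E) (a : N → Finset E) : ℝ :=
  ∑ i, if tm i = t ∧ a i = s then w i else 0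

def IsMixed [Fintype E] (strat : T → Finset (Finset E)) (tm : N → T)
    (σ : N → Finset E → ℝ) : Prop :=
  (∀ i s, 0 ≤ σ i s) ∧ (∀ i s, s ∉ strat (tm i) → σ i s = 0) ∧
  (∀ i, ∑ s ∈ strat (tm i), σ i s = 1)

/-- Expected social cost `E[∑_e X_e c_e(X_e)]` of a mixed strategy profile. -/
noncomputable def ESC [Fintype E] [Fintype N] (c : E → ℝ → ℝ) (w : N → ℝ)
    (σ : N → Finset E → ℝ) : ℝ :=
  expVal σ fun a => ∑ e, loadW w e a * c e (loadW w e a)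

end Defs

/-! The load `Xₑ` of an edge is a sum of independent contributions of the players, each at most
their weight, so its variance is at most `∑ wᵢ² ≤ (max wᵢ) · (total weight) → 0`; together with
`E[Xₑ] → xₑ` this gives `Xₑ → xₑ` in `L²`. The total weight converges, so all loads stay in a fixed
interval `[0, M]`, on which `g(u) = u cₑ(u)` satisfies `|g u - g v| ≤ ε + K (u - v)²`; taking
expectations yields `E[g(Xₑ)] → g(xₑ)`. -/

section ExpVal

variable {E N : Type*} [Fintype E] [Fintype N] (σ : N → Finset E → ℝ)

lemma expVal_add (g h : (N → Finset E) → ℝ) :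
    expVal σ (fun a => g a + h a) = expVal σ g + expVal σ h := by
  simp only [expVal, mul_add, Finset.sum_add_distrib]

lemma expVal_sum {ι : Type*} (s : Finset ι) (g : ι → (N → Finset E) → ℝ) :
    expVal σ (fun a => ∑ k ∈ s, g k a) = ∑ k ∈ s, expVal σ (g k) := by
  simp only [expVal, Finset.mul_sum]
  exact Finset.sum_comm

lemma expVal_const_mul (r : ℝ) (g : (N → Finset E) → ℝ) :
    expVal σ (fun a => r * g a) = r * expVal σ g := by
  simp only [expVal, Finset.mul_sum, mul_left_comm]

lemma expVal_mono (hσ0 : ∀ i s, 0 ≤ σ i s) {g h : (N → Finset E) → ℝ} (hgh : ∀ a, g a ≤ h a) :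
    expVal σ g ≤ expVal σ h :=
  Finset.sum_le_sum fun a _ =>
    mul_le_mul_of_nonneg_left (hgh a) (Finset.prod_nonneg fun i _ => hσ0 i (a i))

lemma expVal_nonneg (hσ0 : ∀ i s, 0 ≤ σ i s) {g : (N → Finset E) → ℝ} (hg : ∀ a, 0 ≤ g a) :
    0 ≤ expVal σ g :=
  Finset.sum_nonneg fun a _ => mul_nonneg (Finset.prod_nonneg fun i _ => hσ0 i (a i)) (hg a)

lemma abs_expVal_le (hσ0 : ∀ i s, 0 ≤ σ i s) (g : (N → Finset E) → ℝ) :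
    |expVal σ g| ≤ expVal σ (fun a => |g a|) := by
  refine (Finset.abs_sum_le_sum_abs _ _).trans (Finset.sum_le_sum fun a _ => ?_)
  rw [abs_mul, abs_of_nonneg (Finset.prod_nonneg fun i _ => hσ0 i (a i))]

lemma expVal_prod_apply (F : N → Finset E → ℝ) :
    expVal σ (fun a => ∏ i, F i (a i)) = ∏ i, ∑ s, σ i s * F i s := by
  classical
  rw [Finset.prod_univ_sum, Fintype.piFinset_univ]
  exact Finset.sum_congr rfl fun a _ => (Finset.prod_mul_distrib).symm

lemma expVal_finsetProd_apply (hσ1 : ∀ i, ∑ s, σ i s = 1) (S : Finset N)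
    (F : N → Finset E → ℝ) :
    expVal σ (fun a => ∏ i ∈ S, F i (a i)) = ∏ i ∈ S, ∑ s, σ i s * F i s := by
  classical
  have hmarg : ∀ i, ∑ s, σ i s * (if i ∈ S then F i s else 1)
      = if i ∈ S then ∑ s, σ i s * F i s else 1 := by
    intro i
    split_ifs <;> simp only [mul_one, hσ1]
  have hF := expVal_prod_apply σ fun i s => if i ∈ S then F i s else 1
  simpa only [hmarg, Finset.prod_ite_mem, Finset.univ_inter] using hF

lemma expVal_const (hσ1 : ∀ i, ∑ s, σ i s = 1) (r : ℝ) : expVal σ (fun _ => r) = r := by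
  have hone : expVal σ (fun _ => (1 : ℝ)) = 1 := by
    simpa only [mul_one, hσ1, Finset.prod_const_one] using expVal_prod_apply σ fun _ _ => 1
  simpa only [mul_one, hone] using expVal_const_mul σ r fun _ => 1

lemma expVal_sub_const (hσ1 : ∀ i, ∑ s, σ i s = 1) (g : (N → Finset E) → ℝ) (r : ℝ) :
    expVal σ (fun a => g a - r) = expVal σ g - r := by
  simp only [sub_eq_add_neg, expVal_add, expVal_const σ hσ1]

lemma expVal_sum_apply (hσ1 : ∀ i, ∑ s, σ i s = 1) (f : N → Finset E → ℝ) :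
    expVal σ (fun a => ∑ i, f i (a i)) = ∑ i, ∑ s, σ i s * f i s := by
  rw [expVal_sum]
  refine Finset.sum_congr rfl fun i _ => ?_
  simpa only [Finset.prod_singleton] using expVal_finsetProd_apply σ hσ1 {i} f

lemma expVal_sq_sum_apply (hσ1 : ∀ i, ∑ s, σ i s = 1) (f : N → Finset E → ℝ) :
    expVal σ (fun a => (∑ i, f i (a i)) ^ 2) = (∑ i, ∑ s, σ i s * f i s) ^ 2
      + ∑ i, (∑ s, σ i s * f i s ^ 2 - (∑ s, σ i s * f i s) ^ 2) := by
  classical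
  set m : N → ℝ := fun i => ∑ s, σ i s * f i s with hm
  have hcross : ∀ i j, expVal σ (fun a => f i (a i) * f j (a j))
      = m i * m j + if i = j then ∑ s, σ i s * f i s ^ 2 - m i ^ 2 else 0 := by
    intro i j
    rcases eq_or_ne i j with rfl | hij
    · have h := expVal_finsetProd_apply σ hσ1 {i} fun k s => f k s * f k s
      simp only [Finset.prod_singleton] at h
      simp only [h, if_true, hm, sq]
      ring
    · have h := expVal_finsetProd_apply σ hσ1 {i, j} f
      simpa only [Finset.prod_pair hij, hij, if_false, add_zero] using h
  simp only [sq (∑ i, f i _), Finset.sum_mul_sum, expVal_sum, hcross, Finset.sum_add_distrib,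
    Finset.sum_ite_eq, Finset.mem_univ, if_true, sq (∑ i, m i)]
  rfl

lemma expVal_sub_sq (hσ1 : ∀ i, ∑ s, σ i s = 1) (g : (N → Finset E) → ℝ) (v : ℝ) :
    expVal σ (fun a => (g a - v) ^ 2)
      = expVal σ (fun a => g a ^ 2) - 2 * v * expVal σ g + v ^ 2 := by
  have hexpand : (fun a => (g a - v) ^ 2) = fun a => g a ^ 2 + ((-2 * v) * g a + v ^ 2) := by
    ext a
    ring
  rw [hexpand, expVal_add, expVal_add, expVal_const_mul, expVal_const σ hσ1]
  ring

end ExpVal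

section Mixed

variable {E T N : Type*} [Fintype E] {strat : T → Finset (Finset E)} {tm : N → T}
  {σ : N → Finset E → ℝ}

lemma IsMixed.nonneg (h : IsMixed strat tm σ) : ∀ i s, 0 ≤ σ i s := h.1

lemma IsMixed.sum_eq_one (h : IsMixed strat tm σ) (i : N) : ∑ s, σ i s = 1 := by
  rw [← h.2.2 i]
  exact (Finset.sum_subset (Finset.subset_univ _) fun s _ hs => h.2.1 i s hs).symm

end Mixed

section Load

variable {E N : Type*} [Fintype E] [Fintype N] {w : N → ℝ}

lemma loadW_nonneg (hw : ∀ i, 0 ≤ w i) (e : E) (a : N → Finset E) : 0 ≤ loadW w e a :=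
  Finset.sum_nonneg fun i _ => by split_ifs <;> simp [hw i]

lemma loadW_le_sum (hw : ∀ i, 0 ≤ w i) (e : E) (a : N → Finset E) : loadW w e a ≤ ∑ i, w i :=
  Finset.sum_le_sum fun i _ => by split_ifs <;> simp [hw i]

lemma expVal_sub_sq_loadW_le (σ : N → Finset E → ℝ) (hσ0 : ∀ i s, 0 ≤ σ i s)
    (hσ1 : ∀ i, ∑ s, σ i s = 1) (e : E) (v : ℝ) :
    expVal σ (fun a => (loadW w e a - v) ^ 2) ≤ (expVal σ (loadW w e) - v) ^ 2 + ∑ i, w i ^ 2 := by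
  set f : N → Finset E → ℝ := fun i s => if e ∈ s then w i else 0 with hf
  have hload : loadW w e = fun a => ∑ i, f i (a i) := rfl
  have hvar : ∀ i, ∑ s, σ i s * f i s ^ 2 - (∑ s, σ i s * f i s) ^ 2 ≤ w i ^ 2 := by
    intro i
    have hsq : ∑ s, σ i s * f i s ^ 2 ≤ ∑ s, σ i s * w i ^ 2 :=
      Finset.sum_le_sum fun s _ => mul_le_mul_of_nonneg_left
        (by simp only [hf]; split_ifs <;> simp [sq_nonneg]) (hσ0 i s)
    rw [← Finset.sum_mul, hσ1 i, one_mul] at hsq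
    nlinarith [sq_nonneg (∑ s, σ i s * f i s)]
  rw [expVal_sub_sq σ hσ1, hload, expVal_sq_sum_apply σ hσ1, expVal_sum_apply σ hσ1]
  nlinarith [Finset.sum_le_sum fun i (_ : i ∈ Finset.univ) => hvar i]

end Load

section Limits

/-- Uniform continuity handles nearby points, boundedness of `g` far-apart ones. -/
lemma IsCompact.exists_abs_sub_le_add_mul_sq {s : Set ℝ} (hs : IsCompact s) {g : ℝ → ℝ}
    (hg : ContinuousOn g s) {ε : ℝ} (hε : 0 < ε) :
    ∃ K, 0 ≤ K ∧ ∀ u ∈ s, ∀ v ∈ s, |g u - g v| ≤ ε + K * (u - v) ^ 2 := by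
  obtain ⟨B, hB⟩ := hs.exists_bound_of_continuousOn hg
  obtain ⟨δ, hδ, hclose⟩ :=
    Metric.uniformContinuousOn_iff.mp (hs.uniformContinuousOn_of_continuous hg) ε hε
  have hK : 0 ≤ 2 * |B| / δ ^ 2 := by positivity
  refine ⟨2 * |B| / δ ^ 2, hK, fun u hu v hv => ?_⟩
  rcases lt_or_ge (dist u v) δ with hnear | hfar
  · have h := hclose u hu v hv hnear
    rw [Real.dist_eq] at h
    nlinarith [mul_nonneg hK (sq_nonneg (u - v))]
  · have hgu := (Real.norm_eq_abs _ ▸ hB u hu).trans (le_abs_self B)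
    have hgv := (Real.norm_eq_abs _ ▸ hB v hv).trans (le_abs_self B)
    have hδuv : δ ^ 2 ≤ (u - v) ^ 2 := by
      rw [Real.dist_eq] at hfar
      simpa only [sq_abs] using pow_le_pow_left₀ hδ.le hfar 2
    have hfar' : 2 * |B| ≤ 2 * |B| / δ ^ 2 * (u - v) ^ 2 := by
      rw [div_mul_eq_mul_div, le_div_iff₀ (by positivity)]
      exact mul_le_mul_of_nonneg_left hδuv (by positivity)
    linarith [abs_sub (g u) (g v)]

variable {ι : Type*} {l : Filter ι} {P : ι → Type*} [∀ n, Fintype (P n)]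

lemma tendsto_sum_sq_of_forall_lt (w : ∀ n, P n → ℝ) (hw : ∀ n i, 0 ≤ w n i)
    (hsmall : ∀ ε > (0 : ℝ), ∀ᶠ n in l, ∀ i, w n i < ε) {M : ℝ}
    (hM : ∀ᶠ n in l, ∑ i, w n i ≤ M) :
    Tendsto (fun n => ∑ i, w n i ^ 2) l (𝓝 0) := by
  refine tendsto_order.2 ⟨fun b hb => Eventually.of_forall fun n =>
    hb.trans_le (Finset.sum_nonneg fun i _ => sq_nonneg _), fun b hb => ?_⟩
  have hε : 0 < b / (|M| + 1) := by positivity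
  filter_upwards [hsmall _ hε, hM] with n hlt hsum
  calc ∑ i, w n i ^ 2 ≤ ∑ i, b / (|M| + 1) * w n i :=
        Finset.sum_le_sum fun i _ => by nlinarith [hw n i, hlt i]
    _ = b / (|M| + 1) * ∑ i, w n i := (Finset.mul_sum _ _ _).symm
    _ ≤ b / (|M| + 1) * |M| := mul_le_mul_of_nonneg_left (hsum.trans (le_abs_self M)) hε.le
    _ < b / (|M| + 1) * (|M| + 1) := by gcongr; linarith
    _ = b := div_mul_cancel₀ b (by positivity)

lemma tendsto_expVal_comp_of_tendsto_expVal_sub_sq {E : Type*} [Fintype E]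
    (σ : ∀ n, P n → Finset E → ℝ) (hσ0 : ∀ n i s, 0 ≤ σ n i s) (hσ1 : ∀ n i, ∑ s, σ n i s = 1)
    (X : ∀ n, (P n → Finset E) → ℝ) {s : Set ℝ} (hs : IsCompact s)
    (hX : ∀ᶠ n in l, ∀ a, X n a ∈ s)
    {v : ℝ} (hv : v ∈ s) {g : ℝ → ℝ} (hg : ContinuousOn g s)
    (hL2 : Tendsto (fun n => expVal (σ n) (fun a => (X n a - v) ^ 2)) l (𝓝 0)) :
    Tendsto (fun n => expVal (σ n) (fun a => g (X n a))) l (𝓝 (g v)) := by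
  refine Metric.tendsto_nhds.2 fun ε hε => ?_
  obtain ⟨K, hK0, hK⟩ := hs.exists_abs_sub_le_add_mul_sq hg (half_pos hε)
  have hη : 0 < ε / (2 * (K + 1)) := by positivity
  filter_upwards [hX, hL2.eventually_lt_const hη] with n hXn hn
  have hKη : K * (ε / (2 * (K + 1))) < ε / 2 := by
    rw [mul_div_assoc', div_lt_div_iff₀ (by positivity) two_pos]
    nlinarith
  calc dist (expVal (σ n) fun a => g (X n a)) (g v)
      = |expVal (σ n) (fun a => g (X n a) - g v)| := by
        rw [Real.dist_eq, expVal_sub_const (σ n) (hσ1 n)]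
    _ ≤ expVal (σ n) (fun a => |g (X n a) - g v|) := abs_expVal_le (σ n) (hσ0 n) _
    _ ≤ expVal (σ n) (fun a => ε / 2 + K * (X n a - v) ^ 2) :=
        expVal_mono (σ n) (hσ0 n) fun a => hK _ (hXn a) _ hv
    _ = ε / 2 + K * expVal (σ n) (fun a => (X n a - v) ^ 2) := by
        rw [expVal_add, expVal_const (σ n) (hσ1 n), expVal_const_mul]
    _ < ε := by nlinarith

end Limits

theorem stmt14_general {E T : Type*} [Fintype E] [Fintype T]
    (strat : T → Finset (Finset E))
    (c : E → ℝ → ℝ) (hc : ∀ e, Continuous (c e))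
    (P : ℕ → Type) [∀ n, Fintype (P n)]
    (w : ∀ n, P n → ℝ) (hw : ∀ n i, 0 ≤ w n i)
    (tm : ∀ n, P n → T) (d : T → ℝ)
    (hwmax : ∀ ε > (0 : ℝ), ∀ᶠ n in atTop, ∀ i : P n, w n i < ε)
    (hdem : ∀ t, Tendsto (fun n => ∑ i : P n, if tm n i = t then w n i else 0)
      atTop (nhds (d t)))
    (σ : ∀ n, P n → Finset E → ℝ) (hmix : ∀ n, IsMixed strat (tm n) (σ n))
    (x : E → ℝ)
    (hx : ∀ e, Tendsto (fun n => expVal (σ n) (loadW (w n) e)) atTop (nhds (x e))) :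
    Tendsto (fun n => ESC c (w n) (σ n)) atTop (nhds (∑ e, x e * c e (x e))) := by
  have hσ0 n := (hmix n).nonneg
  have hσ1 n := (hmix n).sum_eq_one
  have htotal : Tendsto (fun n => ∑ i, w n i) atTop (𝓝 (∑ t, d t)) := by
    refine (tendsto_finsetSum Finset.univ fun t _ => hdem t).congr fun n => ?_
    rw [Finset.sum_comm]
    simp only [Finset.sum_ite_eq, Finset.mem_univ, if_true]
  obtain ⟨M, hM⟩ : ∃ M, ∀ᶠ n in atTop, ∑ i, w n i ≤ M := htotal.isBoundedUnder_le
  have hload : ∀ e, ∀ᶠ n in atTop, ∀ a : P n → Finset E, loadW (w n) e a ∈ Set.Icc 0 M :=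
    fun e => hM.mono fun n hn a => ⟨loadW_nonneg (hw n) e a, (loadW_le_sum (hw n) e a).trans hn⟩
  simp only [ESC, expVal_sum]
  refine tendsto_finsetSum _ fun e _ => ?_
  have hxe : x e ∈ Set.Icc 0 M := isClosed_Icc.mem_of_tendsto (hx e) <| (hload e).mono
    fun n hn => ⟨expVal_nonneg _ (hσ0 n) fun a => (hn a).1,
      (expVal_mono _ (hσ0 n) fun a => (hn a).2).trans (expVal_const _ (hσ1 n) M).le⟩
  refine tendsto_expVal_comp_of_tendsto_expVal_sub_sq σ hσ0 hσ1 _ isCompact_Icc (hload e) hxe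
    (continuous_id.mul (hc e)).continuousOn ?_
  have hbound : Tendsto (fun n => (expVal (σ n) (loadW (w n) e) - x e) ^ 2 + ∑ i, w n i ^ 2)
      atTop (𝓝 0) := by
    simpa using ((hx e).sub_const (x e)).pow 2 |>.add (tendsto_sum_sq_of_forall_lt w hw hwmax hM)
  exact squeeze_zero (fun n => expVal_nonneg _ (hσ0 n) fun a => sq_nonneg _)
    (fun n => expVal_sub_sq_loadW_le (σ n) (hσ0 n) (hσ1 n) e (x e)) hbound

/-- Convergence of the expected social cost: for a sequence of weighted congestion games with
maximal weight tending to zero and per-type aggregate demands converging, and any sequence of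
mixed strategy profiles whose expected flow-load pairs converge to `(y, x)`, the expected
social cost converges to `SC(y, x) = ∑_e x_e c_e(x_e)`. -/
theorem stmt14 {E T : Type*} [Fintype E] [Fintype T]
    (strat : T → Finset (Finset E))
    (c : E → ℝ → ℝ) (hc : ∀ e, Continuous (c e)) (hmono : ∀ e, Monotone (c e))
    (P : ℕ → Type) [∀ n, Fintype (P n)]
    (w : ∀ n, P n → ℝ) (hw : ∀ n i, 0 ≤ w n i)
    (tm : ∀ n, P n → T) (d : T → ℝ)
    (hwmax : ∀ ε > (0 : ℝ), ∀ᶠ n in atTop, ∀ i : P n, w n i < ε)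
    (hdem : ∀ t, Tendsto (fun n => ∑ i : P n, if tm n i = t then w n i else 0)
      atTop (nhds (d t)))
    (σ : ∀ n, P n → Finset E → ℝ) (hmix : ∀ n, IsMixed strat (tm n) (σ n))
    (y : T → Finset E → ℝ) (x : E → ℝ)
    (hy : ∀ t s, Tendsto (fun n => expVal (σ n) (flowW (w n) (tm n) t s))
      atTop (nhds (y t s)))
    (hx : ∀ e, Tendsto (fun n => expVal (σ n) (loadW (w n) e)) atTop (nhds (x e))) :
    Tendsto (fun n => ESC c (w n) (σ n)) atTop (nhds (∑ e, x e * c e (x e))) :=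
  stmt14_general strat c hc P w hw tm d hwmax hdem σ hmix x hx
end
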